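/- arXiv:math/0303164 — 3 statements merged into one kernel-verified Lean document; each statement's English description precedes it below -/
import Mathlib

section
/- For any (n-1)-dimensional simplicial complex K on [m] and any field k, the Poincaré (Hilbert) series of the Stanley–Reisner ring, F(k[K]; t) = ∑_{i≥0} dim_k(k[K]^i) t^i, satisfies F(k[K]; t) = ∑_{i=-1}^{n-1} f_i t^{2(i+1)}/(1-t²)^{i+1} = (h_0 + h_1 t² + … + h_n t^{2n})/(1-t²)^n as formal power series; equivalently (1-t²)^n · F(k[K]; t) = h_0 + h_1 t² + … + h_n t^{2n}. (Stanley.) -/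
/-- An (abstract) simplicial complex on the vertex set `[m] = {1, …, m}`:
a collection of subsets of `[m]` closed under passage to subsets. -/
def IsSimplicialComplex {m : ℕ} (K : Set (Finset (Fin m))) : Prop :=
  ∀ σ ∈ K, ∀ τ : Finset (Fin m), τ ⊆ σ → τ ∈ K

/-- The Stanley–Reisner ideal of `K`: the ideal of `k[v₁, …, v_m]` generated by the
square-free monomials `v_{i₁} ⋯ v_{i_s}` over all non-faces `{i₁, …, i_s} ∉ K`. -/
noncomputable def srIdeal (k : Type) [CommRing k] {m : ℕ} (K : Set (Finset (Fin m))) :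
    Ideal (MvPolynomial (Fin m) k) :=
  Ideal.span {p | ∃ σ : Finset (Fin m), σ ∉ K ∧ p = ∏ i ∈ σ, MvPolynomial.X i}

/-- The Stanley–Reisner ring `k[K] = k[v₁, …, v_m]/I_K`. -/
abbrev SRRing (k : Type) [CommRing k] {m : ℕ} (K : Set (Finset (Fin m))) :=
  MvPolynomial (Fin m) k ⧸ srIdeal k K

open Polynomial in
/-- The defining identity of the `h`-vector:
`∑_{i=0}^n hᵢ t^{n-i} = ∑_{i=0}^n f_{i-1} (t-1)^{n-i}` (where `f_{-1} = 1`),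
an identity of polynomials in `ℤ[t]`; `fm1 i` stands for `f_{i-1}`. -/
def HIdentity (n : ℕ) (fm1 h : ℕ → ℤ) : Prop :=
  (∑ i ∈ Finset.range (n + 1), Polynomial.C (h i) * Polynomial.X ^ (n - i)) =
    ∑ i ∈ Finset.range (n + 1), Polynomial.C (fm1 i) * (Polynomial.X - 1) ^ (n - i)

/-- `f_{i-1}(K)`, the number of faces of `K` of cardinality `i`, with `f_{-1} = 1`. -/
noncomputable def cfm1 {m : ℕ} (K : Set (Finset (Fin m))) : ℕ → ℤ := fun i =>
  if i = 0 then 1 else (Nat.card {σ : Finset (Fin m) // σ ∈ K ∧ σ.card = i} : ℤ)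

/-- `K` is `(n-1)`-dimensional: every face has at most `n` vertices and some face has
exactly `n` vertices. -/
def HasDimension {m : ℕ} (K : Set (Finset (Fin m))) (n : ℕ) : Prop :=
  (∀ σ ∈ K, σ.card ≤ n) ∧ ∃ σ ∈ K, σ.card = n

/-- The degree-`2d` graded component of the Stanley–Reisner ring `k[K]`
(`deg vᵢ = 2`): the image of the homogeneous polynomials of degree `d`. -/
noncomputable def srComponent (k : Type) [Field k] {m : ℕ} (K : Set (Finset (Fin m)))
    (d : ℕ) : Submodule k (SRRing k K) :=
  Submodule.map (Ideal.Quotient.mkₐ k (srIdeal k K)).toLinearMap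
    (MvPolynomial.homogeneousSubmodule (Fin m) k d)

/-- `dim_k (k[K])^i`, the dimension of the degree-`i` graded piece of `k[K]`
(`deg vᵢ = 2`, so odd graded pieces vanish). -/
noncomputable def srHilbert (k : Type) [Field k] {m : ℕ} (K : Set (Finset (Fin m))) :
    ℕ → ℕ := fun i =>
  if 2 ∣ i then Module.finrank k (srComponent k K (i / 2)) else 0


section Aux
open MvPolynomial Finsupp


noncomputable def ind {m : ℕ} (σ : Finset (Fin m)) : Fin m →₀ ℕ := ∑ i ∈ σ, Finsupp.single i 1

lemma ind_apply {m : ℕ} (σ : Finset (Fin m)) (j : Fin m) :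
    ind σ j = if j ∈ σ then 1 else 0 := by
  classical
  simp [ind, Finsupp.finset_sum_apply, Finsupp.single_apply, Finset.sum_ite_eq' σ j (fun _ => 1)]

lemma support_ind {m : ℕ} (σ : Finset (Fin m)) : (ind σ).support = σ := by
  ext j; simp [Finsupp.mem_support_iff, ind_apply]

lemma prod_X_eq (k : Type) [CommRing k] {m : ℕ} (σ : Finset (Fin m)) :
    (∏ i ∈ σ, (MvPolynomial.X i : MvPolynomial (Fin m) k)) = monomial (ind σ) 1 := by
  classical
  induction σ using Finset.induction with
  | empty => simp [ind]
  | @insert a s h ih =>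
      rw [Finset.prod_insert h, ih]
      show X a * monomial (ind s) 1 = _
      rw [X, monomial_mul, one_mul]
      congr 1
      rw [ind, ind, Finset.sum_insert h]

lemma coeff_srIdeal (k : Type) [CommRing k] {m : ℕ} {K : Set (Finset (Fin m))}
    (hK : IsSimplicialComplex K) {q : MvPolynomial (Fin m) k} (hq : q ∈ srIdeal k K)
    {a : Fin m →₀ ℕ} (ha : a.support ∈ K) : MvPolynomial.coeff a q = 0 := by
  classical
  induction hq using Submodule.span_induction generalizing a with
  | mem p hp =>
      obtain ⟨σ, hσ, rfl⟩ := hp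
      rw [prod_X_eq, coeff_monomial]
      split
      · next h =>
          exact absurd (by rw [← h, support_ind] at ha; exact ha) hσ
      · rfl
  | zero => simp
  | add x y _ _ hx hy => simp [coeff_add, hx ha, hy ha]
  | smul r x _ hx =>
      rw [smul_eq_mul, coeff_mul]
      apply Finset.sum_eq_zero
      rintro ⟨b, c⟩ hbc
      rw [Finset.HasAntidiagonal.mem_antidiagonal] at hbc
      have hc : c.support ⊆ a.support := by
        intro i hi
        simp only [Finsupp.mem_support_iff] at hi ⊢
        intro h0
        apply hi
        have := congrArg (fun f : Fin m →₀ ℕ => f i) hbc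
        simp only [Finsupp.add_apply] at this
        omega
      have := hx (a := c) (hK _ ha _ hc)
      simp [this]

lemma monomial_mem_srIdeal (k : Type) [CommRing k] {m : ℕ} {K : Set (Finset (Fin m))}
    {a : Fin m →₀ ℕ} (ha : a.support ∉ K) : monomial a (1 : k) ∈ srIdeal k K := by
  have hle : ind a.support ≤ a := by
    intro j
    rw [ind_apply]
    split
    · next h => exact Finsupp.mem_support_iff.mp h |> Nat.one_le_iff_ne_zero.mpr
    · exact Nat.zero_le _
  have : monomial a (1 : k) = monomial (ind a.support) 1 * monomial (a - ind a.support) 1 := by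
    rw [monomial_mul, one_mul, add_tsub_cancel_of_le hle]
  rw [this]
  exact Ideal.mul_mem_right _ _ (Ideal.subset_span ⟨a.support, ha, (prod_X_eq k _).symm⟩)

lemma coeff_span_monomials (k : Type) [Field k] {m : ℕ} (T : Set (Fin m →₀ ℕ))
    {p : MvPolynomial (Fin m) k}
    (hp : p ∈ Submodule.span k ((fun a => monomial a (1 : k)) '' T))
    {b : Fin m →₀ ℕ} (hb : b ∉ T) : MvPolynomial.coeff b p = 0 := by
  classical
  induction hp using Submodule.span_induction with
  | mem p hp =>
      obtain ⟨a, haT, rfl⟩ := hp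
      rw [coeff_monomial]
      split
      · next h => exact absurd (h ▸ haT) hb
      · rfl
  | zero => simp
  | add x y _ _ hx hy => simp [coeff_add, hx, hy]
  | smul r x _ hx => simp [MvPolynomial.coeff_smul, hx]

lemma finrank_srComponent (k : Type) [Field k] {m : ℕ} {K : Set (Finset (Fin m))}
    (hK : IsSimplicialComplex K) (d : ℕ) :
    Module.finrank k (srComponent k K d) =
      Nat.card {a : Fin m →₀ ℕ // a.support ∈ K ∧ a.degree = d} := by
  classical
  set π := (Ideal.Quotient.mkₐ k (srIdeal k K)).toLinearMap with hπ
  set S := {a : Fin m →₀ ℕ // a.support ∈ K ∧ a.degree = d}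
  set v : S → MvPolynomial (Fin m) k := fun a => monomial a.1 1 with hv
  have hker : ∀ q, π q = 0 ↔ q ∈ srIdeal k K := fun q => Ideal.Quotient.eq_zero_iff_mem
  -- linear independence of monomials
  have li_v : LinearIndependent k v := by
    have := (basisMonomials (Fin m) k).linearIndependent
    have h2 : v = (basisMonomials (Fin m) k) ∘ (fun a : S => a.1) := by
      funext a; simp [hv, coe_basisMonomials]
    rw [h2]
    exact this.comp _ Subtype.val_injective
  have hdisj : Disjoint (Submodule.span k (Set.range v)) (LinearMap.ker π) := by
    rw [Submodule.disjoint_def]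
    intro x hx hker'
    have hxI : x ∈ srIdeal k K := (hker x).mp (LinearMap.mem_ker.mp hker')
    have hxT : x ∈ Submodule.span k ((fun a => monomial a (1:k)) '' {a | a.support ∈ K}) := by
      refine Submodule.span_mono ?_ hx
      rintro _ ⟨a, rfl⟩
      exact ⟨a.1, a.2.1, rfl⟩
    ext b
    rw [MvPolynomial.coeff_zero]
    by_cases hb : b.support ∈ K
    · exact coeff_srIdeal k hK hxI hb
    · exact coeff_span_monomials k _ hxT hb
  have li_pv : LinearIndependent k (⇑π ∘ v) := li_v.map hdisj
  -- the family in the submodule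
  have hmem : ∀ a : S, π (v a) ∈ srComponent k K d := fun a =>
    ⟨v a, isHomogeneous_monomial 1 a.2.2, rfl⟩
  set b : S → srComponent k K d := fun a => ⟨π (v a), hmem a⟩ with hb
  have li_b : LinearIndependent k b := by
    apply LinearIndependent.of_comp (srComponent k K d).subtype
    have : (srComponent k K d).subtype ∘ b = ⇑π ∘ v := rfl
    rw [this]; exact li_pv
  have hcomp : srComponent k K d =
      Submodule.span k (⇑π '' ((fun a => monomial a (1:k)) '' {a | a.degree = d})) := by
    rw [srComponent, ← hπ, homogeneousSubmodule_eq_finsupp_supported,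
      AddMonoidAlgebra.supported_eq_span_single, Submodule.map_span]
    have : (fun i => (AddMonoidAlgebra.single i 1 : MvPolynomial (Fin m) k)) = (fun a => monomial a (1:k)) :=
      funext fun a => single_eq_monomial a 1
    rw [this]
  have hspan_eq : Submodule.span k (⇑π '' ((fun a => monomial a (1:k)) '' {a | a.degree = d})) =
      Submodule.span k (Set.range (⇑π ∘ v)) := by
    apply le_antisymm
    · rw [Submodule.span_le]
      rintro _ ⟨_, ⟨a, ha, rfl⟩, rfl⟩
      by_cases hs : a.support ∈ K
      · exact Submodule.subset_span ⟨⟨a, hs, ha⟩, rfl⟩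
      · have : π (monomial a 1) = 0 := (hker _).mpr (monomial_mem_srIdeal k hs)
        rw [this]
        exact Submodule.zero_mem _
    · rw [Submodule.span_le]
      rintro _ ⟨a, rfl⟩
      exact Submodule.subset_span ⟨v a, ⟨a.1, a.2.2, rfl⟩, rfl⟩
  have heq : Submodule.map (srComponent k K d).subtype (Submodule.span k (Set.range b)) =
      Submodule.map (srComponent k K d).subtype ⊤ := by
    rw [Submodule.map_span, Submodule.map_top, Submodule.range_subtype, ← Set.range_comp]
    have hcb : (srComponent k K d).subtype ∘ b = ⇑π ∘ v := rfl
    rw [hcb, hcomp, hspan_eq]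
  have span_b : ⊤ ≤ Submodule.span k (Set.range b) :=
    le_of_eq (Submodule.map_injective_of_injective
      (Submodule.injective_subtype (srComponent k K d)) heq).symm
  have B : Module.Basis S k (srComponent k K d) := Module.Basis.mk li_b span_b
  exact Module.finrank_eq_nat_card_basis B

end Aux

section Aux2
open PowerSeries Finset


noncomputable def gs : PowerSeries ℚ := PowerSeries.mk fun j => if Even j ∧ j ≠ 0 then 1 else 0

lemma gs_eq : gs = X ^ 2 + X ^ 2 * gs := by
  ext j
  rw [map_add, PowerSeries.coeff_X_pow_mul', PowerSeries.coeff_X_pow]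
  simp only [gs, coeff_mk]
  rcases Nat.lt_or_ge j 2 with hj | hj
  · interval_cases j <;> simp
  · rw [if_pos hj]
    have h1 : Even (j - 2) ↔ Even j := by
      rw [Nat.even_sub hj]
      simp
    by_cases he : Even j
    · have hA : Even j ∧ j ≠ 0 := ⟨he, by omega⟩
      rw [if_pos hA]
      by_cases hb : j = 2
      · subst hb; norm_num
      · have hC : Even (j - 2) ∧ j - 2 ≠ 0 := ⟨h1.mpr he, by omega⟩
        rw [if_pos hC, if_neg hb]
        norm_num
    · have hb : j ≠ 2 := by rintro rfl; exact he (by decide)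
      have hC : ¬(Even (j - 2) ∧ j - 2 ≠ 0) := fun h => he (h1.mp h.1)
      rw [if_neg (fun h : Even j ∧ j ≠ 0 => he h.1), if_neg hb, if_neg hC]
      norm_num
lemma one_sub_sq_mul_gs : (1 - (X : ℚ⟦X⟧) ^ 2) * gs = X ^ 2 := by
  rw [sub_mul, one_mul]
  nth_rewrite 1 [gs_eq]
  ring

lemma coeff_gs_prod {m : ℕ} (σ : Finset (Fin m)) (j : ℕ) :
    PowerSeries.coeff j (∏ _i ∈ σ, gs) =
      (((σ.finsuppAntidiag j).filter fun l => ∀ i ∈ σ, Even (l i) ∧ l i ≠ 0).card : ℚ) := by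
  classical
  rw [PowerSeries.coeff_prod]
  rw [Finset.card_filter, Nat.cast_sum]
  apply Finset.sum_congr rfl
  intro l _
  simp only [gs, coeff_mk]
  rw [Finset.prod_boole]
  split_ifs <;> norm_num

lemma card_even_comps {m : ℕ} (σ : Finset (Fin m)) (j : ℕ) :
    ((σ.finsuppAntidiag j).filter fun l => ∀ i ∈ σ, Even (l i) ∧ l i ≠ 0).card =
      if 2 ∣ j then ((σ.finsuppAntidiag (j / 2)).filter fun a => a.support = σ).card else 0 := by
  classical
  split_ifs with hj
  · refine Finset.card_bij' (fun l _ => l.mapRange (· / 2) (by simp))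
      (fun a _ => a.mapRange (2 * ·) (by simp)) ?_ ?_ ?_ ?_
    · intro l hl
      rw [Finset.mem_filter, Finset.mem_finsuppAntidiag] at hl ⊢
      obtain ⟨⟨hsum, hsupp⟩, hev⟩ := hl
      have h2 : 2 * σ.sum (fun i => l i / 2) = j := by
        rw [Finset.mul_sum, ← hsum]
        exact Finset.sum_congr rfl fun i hi => Nat.two_mul_div_two_of_even (hev i hi).1
      have hsupp2 : (l.mapRange (· / 2) (by simp)).support = σ := by
        ext i
        rw [Finsupp.mem_support_iff, Finsupp.mapRange_apply]
        constructor
        · intro h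
          by_contra hi
          have : l i = 0 := Finsupp.notMem_support_iff.mp (fun hm => hi (hsupp hm))
          simp [this] at h
        · intro hi
          obtain ⟨he, h0⟩ := hev i hi
          obtain ⟨c, hc⟩ := he
          show l i / 2 ≠ 0
          omega
      refine ⟨⟨?_, hsupp2.le⟩, hsupp2⟩
      · rw [show σ.sum ⇑(l.mapRange (· / 2) (by simp)) = σ.sum fun i => l i / 2 from
          Finset.sum_congr rfl fun i _ => Finsupp.mapRange_apply]
        omega
    · intro a ha
      rw [Finset.mem_filter, Finset.mem_finsuppAntidiag] at ha ⊢
      obtain ⟨⟨hsum, hsupp⟩, hsuppeq⟩ := ha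
      have hsum2 : σ.sum ⇑(a.mapRange (2 * ·) (by simp)) = j := by
        rw [show σ.sum ⇑(a.mapRange (2 * ·) (by simp)) = σ.sum fun i => 2 * a i from
          Finset.sum_congr rfl fun i _ => Finsupp.mapRange_apply, ← Finset.mul_sum, hsum]
        omega
      refine ⟨⟨hsum2, le_trans Finsupp.support_mapRange hsupp⟩, ?_⟩
      intro i hi
      rw [Finsupp.mapRange_apply]
      have : a i ≠ 0 := Finsupp.mem_support_iff.mp (hsuppeq ▸ hi)
      exact ⟨⟨a i, by ring⟩, by omega⟩
    · intro l hl
      rw [Finset.mem_filter] at hl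
      ext i
      rw [Finsupp.mapRange_apply, Finsupp.mapRange_apply]
      by_cases hi : i ∈ σ
      · exact Nat.two_mul_div_two_of_even (hl.2 i hi).1
      · have : l i = 0 := Finsupp.notMem_support_iff.mp
          (fun hm => hi ((Finset.mem_finsuppAntidiag.mp hl.1).2 hm))
        simp [this]
    · intro a _
      ext i
      rw [Finsupp.mapRange_apply, Finsupp.mapRange_apply]
      omega
  · rw [Finset.card_eq_zero, Finset.filter_eq_empty_iff]
    intro l hl
    rw [Finset.mem_finsuppAntidiag] at hl
    intro hev
    apply hj
    rw [← hl.1]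
    exact (Finset.even_sum _ fun i hi => (hev i hi).1).two_dvd

lemma count_partition {m : ℕ} (K : Set (Finset (Fin m))) [DecidablePred (· ∈ K)] (d : ℕ) :
    ((Finset.univ.finsuppAntidiag d).filter fun a : Fin m →₀ ℕ => a.support ∈ K).card =
      ∑ σ ∈ K.toFinite.toFinset,
        ((σ.finsuppAntidiag d).filter fun a => a.support = σ).card := by
  classical
  rw [Finset.card_eq_sum_card_fiberwise
    (f := fun a : Fin m →₀ ℕ => a.support) (t := K.toFinite.toFinset)
    (fun a ha => by
      rw [Finset.mem_coe, Set.Finite.mem_toFinset]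
      exact (Finset.mem_filter.mp ha).2)]
  apply Finset.sum_congr rfl
  intro σ hσ
  congr 1
  ext a
  rw [Finset.mem_filter, Finset.mem_filter, Finset.mem_filter, Finset.mem_finsuppAntidiag',
    Finset.mem_finsuppAntidiag']
  constructor
  · rintro ⟨⟨⟨hs, _⟩, _⟩, rfl⟩
    exact ⟨⟨hs, le_refl _⟩, rfl⟩
  · rintro ⟨⟨hs, _⟩, rfl⟩
    exact ⟨⟨⟨hs, Finset.subset_univ _⟩, Set.Finite.mem_toFinset _ |>.mp hσ⟩, rfl⟩

lemma count_faces {m : ℕ} {K : Set (Finset (Fin m))} [DecidablePred (· ∈ K)]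
    (hK : IsSimplicialComplex K) (hne : K.Nonempty) (i : ℕ) :
    ((K.toFinite.toFinset.filter fun σ => σ.card = i).card : ℤ) = cfm1 K i := by
  classical
  rcases eq_or_ne i 0 with rfl | hi
  · rw [cfm1, if_pos rfl]
    norm_cast
    rw [show (K.toFinite.toFinset.filter fun σ => σ.card = 0) = {∅} from ?_]
    · exact Finset.card_singleton _
    ext σ
    rw [Finset.mem_filter, Set.Finite.mem_toFinset, Finset.mem_singleton, Finset.card_eq_zero]
    constructor
    · rintro ⟨_, rfl⟩; rfl
    · rintro rfl
      obtain ⟨τ, hτ⟩ := hne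
      exact ⟨hK τ hτ ∅ (Finset.empty_subset τ), rfl⟩
  · rw [cfm1, if_neg hi]
    norm_cast
    rw [Nat.card_eq_fintype_card, Fintype.card_subtype]
    congr 1
    ext σ
    simp [Set.Finite.mem_toFinset]

lemma natcard_eq {m : ℕ} (K : Set (Finset (Fin m))) [DecidablePred (· ∈ K)] (d : ℕ) :
    Nat.card {a : Fin m →₀ ℕ // a.support ∈ K ∧ a.degree = d} =
      ∑ σ ∈ K.toFinite.toFinset,
        ((σ.finsuppAntidiag d).filter fun a => a.support = σ).card := by
  rw [← count_partition]
  classical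
  have hset : {a : Fin m →₀ ℕ | a.support ∈ K ∧ a.degree = d} =
      ↑((Finset.univ.finsuppAntidiag d).filter fun a : Fin m →₀ ℕ => a.support ∈ K) := by
    ext a
    rw [Set.mem_setOf_eq, Finset.coe_filter, Set.mem_setOf_eq, Finset.mem_finsuppAntidiag']
    have hdeg : a.sum (fun _ x => x) = a.degree := by
      rw [Finsupp.degree, Finsupp.sum]
      rfl
    constructor
    · rintro ⟨h1, h2⟩
      exact ⟨⟨by rw [hdeg, h2], Finset.subset_univ _⟩, h1⟩
    · rintro ⟨⟨h2, _⟩, h1⟩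
      exact ⟨h1, by rw [← hdeg, h2]⟩
  calc Nat.card {a : Fin m →₀ ℕ // a.support ∈ K ∧ a.degree = d}
      = Nat.card {a : Fin m →₀ ℕ | a.support ∈ K ∧ a.degree = d} := rfl
    _ = _ := by rw [Nat.card_coe_set_eq, hset, Set.ncard_coe_finset]

end Aux2

section Aux3
open Polynomial

lemma h_poly {n : ℕ} {f h : ℕ → ℤ} (hh : HIdentity n f h) :
    (∑ i ∈ Finset.range (n + 1), Polynomial.C ((h i : ℚ)) * Polynomial.X ^ i) =
      ∑ i ∈ Finset.range (n + 1),
        Polynomial.C ((f i : ℚ)) * Polynomial.X ^ i * (1 - Polynomial.X) ^ (n - i) := by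
  have hx : (RatFunc.X : RatFunc ℚ) ≠ 0 := RatFunc.X_ne_zero
  have hinj := IsFractionRing.injective ℚ[X] (RatFunc ℚ)
  apply hinj
  have key := congrArg (Polynomial.aeval ((RatFunc.X : RatFunc ℚ)⁻¹)) hh
  simp only [map_sum, map_mul, map_pow, Polynomial.aeval_C, Polynomial.aeval_X, map_sub,
    map_one] at key
  have key2 := congrArg (· * (RatFunc.X : RatFunc ℚ) ^ n) key
  simp only [Finset.sum_mul] at key2
  have Lgen : ∀ (c : RatFunc ℚ) (e j : ℕ),
      c * (RatFunc.X : RatFunc ℚ)⁻¹ ^ e * RatFunc.X ^ (e + j) = c * RatFunc.X ^ j := by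
    intro c e j
    rw [pow_add, ← mul_assoc, mul_assoc c, ← mul_pow, inv_mul_cancel₀ hx, one_pow, mul_one]
  have Rgen : ∀ (c : RatFunc ℚ) (e j : ℕ),
      c * ((RatFunc.X : RatFunc ℚ)⁻¹ - 1) ^ e * RatFunc.X ^ (e + j) =
        c * ((1 - RatFunc.X) ^ e * RatFunc.X ^ j) := by
    intro c e j
    rw [pow_add, ← mul_assoc, mul_assoc c, ← mul_pow, sub_mul, inv_mul_cancel₀ hx, one_mul,
      mul_assoc]
  have L : ∀ i ∈ Finset.range (n + 1),
      (algebraMap ℤ (RatFunc ℚ)) (h i) * ((RatFunc.X : RatFunc ℚ)⁻¹) ^ (n - i) * RatFunc.X ^ n =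
        (algebraMap ℤ (RatFunc ℚ)) (h i) * RatFunc.X ^ i := by
    intro i hi
    rw [Finset.mem_range] at hi
    have := Lgen ((algebraMap ℤ (RatFunc ℚ)) (h i)) (n - i) i
    rwa [Nat.sub_add_cancel (by omega)] at this
  have R : ∀ i ∈ Finset.range (n + 1),
      (algebraMap ℤ (RatFunc ℚ)) (f i) * ((RatFunc.X : RatFunc ℚ)⁻¹ - 1) ^ (n - i) * RatFunc.X ^ n =
        (algebraMap ℤ (RatFunc ℚ)) (f i) * ((1 - RatFunc.X) ^ (n - i) * RatFunc.X ^ i) := by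
    intro i hi
    rw [Finset.mem_range] at hi
    have := Rgen ((algebraMap ℤ (RatFunc ℚ)) (f i)) (n - i) i
    rwa [Nat.sub_add_cancel (by omega)] at this
  rw [Finset.sum_congr rfl L, Finset.sum_congr rfl R] at key2
  have cast_int : ∀ z : ℤ, (algebraMap ℤ (RatFunc ℚ)) z =
      algebraMap ℚ[X] (RatFunc ℚ) (Polynomial.C ((z : ℚ))) := by
    intro z
    rw [show (Polynomial.C ((z : ℚ)) : ℚ[X]) = ((z : ℚ[X])) by simp,
      map_intCast]
    exact map_intCast (algebraMap ℤ (RatFunc ℚ)) z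
  simp only [map_sum, map_mul, map_pow, map_sub, map_one, RatFunc.algebraMap_X]
  calc (∑ i ∈ Finset.range (n + 1),
        (algebraMap ℚ[X] (RatFunc ℚ)) (Polynomial.C ((h i : ℚ))) * RatFunc.X ^ i)
      = ∑ i ∈ Finset.range (n + 1), (algebraMap ℤ (RatFunc ℚ)) (h i) * RatFunc.X ^ i := by
        refine Finset.sum_congr rfl fun i _ => ?_
        rw [cast_int]
    _ = ∑ i ∈ Finset.range (n + 1),
          (algebraMap ℤ (RatFunc ℚ)) (f i) * ((1 - RatFunc.X) ^ (n - i) * RatFunc.X ^ i) := key2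
    _ = _ := by
        refine Finset.sum_congr rfl fun i _ => ?_
        rw [cast_int]
        ring

end Aux3

open PowerSeries in
/-- **Stanley.** For an `(n-1)`-dimensional simplicial complex `K` on `[m]`, the
Poincaré (Hilbert) series `F(k[K]; t) = ∑_i dim_k (k[K])^i tⁱ` satisfies
`F(k[K]; t) = ∑_{i=-1}^{n-1} fᵢ t^{2(i+1)}/(1-t²)^{i+1} = (∑_{i=0}^n hᵢ t^{2i})/(1-t²)^n`;
equivalently, after clearing denominators, the two identities of formal power series
stated below. -/
theorem sr_hilbert_series (k : Type) [Field k] {m n : ℕ} (K : Set (Finset (Fin m)))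
    (hK : IsSimplicialComplex K) (hne : K.Nonempty) (hdim : HasDimension K n)
    (h : ℕ → ℤ) (hh : HIdentity n (cfm1 K) h) :
    (1 - (X : ℚ⟦X⟧) ^ 2) ^ n * PowerSeries.mk (fun i => (srHilbert k K i : ℚ)) =
      ∑ i ∈ Finset.range (n + 1),
        PowerSeries.C ((cfm1 K i : ℚ)) * X ^ (2 * i) * (1 - (X : ℚ⟦X⟧) ^ 2) ^ (n - i) ∧
    (1 - (X : ℚ⟦X⟧) ^ 2) ^ n * PowerSeries.mk (fun i => (srHilbert k K i : ℚ)) =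
      ∑ i ∈ Finset.range (n + 1), PowerSeries.C ((h i : ℚ)) * X ^ (2 * i) := by
  classical
  have key : PowerSeries.mk (fun i => (srHilbert k K i : ℚ)) =
      ∑ σ ∈ K.toFinite.toFinset, ∏ _i ∈ σ, gs := by
    ext j
    rw [PowerSeries.coeff_mk, map_sum]
    rw [Finset.sum_congr rfl fun σ _ => (coeff_gs_prod σ j).trans (by rw [card_even_comps])]
    by_cases hj : 2 ∣ j
    · simp only [if_pos hj]
      rw [srHilbert, if_pos hj, finrank_srComponent k hK, natcard_eq]
      push_cast
      rfl
    · simp [srHilbert, hj]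
  have hfirst : (1 - (X : ℚ⟦X⟧) ^ 2) ^ n * PowerSeries.mk (fun i => (srHilbert k K i : ℚ)) =
      ∑ i ∈ Finset.range (n + 1),
        PowerSeries.C ((cfm1 K i : ℚ)) * X ^ (2 * i) * (1 - (X : ℚ⟦X⟧) ^ 2) ^ (n - i) := by
    rw [key, Finset.mul_sum]
    have step : ∀ σ ∈ K.toFinite.toFinset,
        (1 - (X : ℚ⟦X⟧) ^ 2) ^ n * ∏ _i ∈ σ, gs =
          X ^ (2 * σ.card) * (1 - (X : ℚ⟦X⟧) ^ 2) ^ (n - σ.card) := by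
      intro σ hσ
      have hcard : σ.card ≤ n := hdim.1 σ ((Set.Finite.mem_toFinset _).mp hσ)
      rw [Finset.prod_const,
        show ((1 - (X : ℚ⟦X⟧) ^ 2) ^ n) =
          (1 - (X : ℚ⟦X⟧) ^ 2) ^ (n - σ.card) * (1 - (X : ℚ⟦X⟧) ^ 2) ^ σ.card from by
            rw [← pow_add, Nat.sub_add_cancel hcard],
        mul_assoc, ← mul_pow, one_sub_sq_mul_gs, ← pow_mul, mul_comm 2 σ.card, pow_mul,
        ← pow_mul, mul_comm σ.card 2]
      ring
    rw [Finset.sum_congr rfl step]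
    rw [← Finset.sum_fiberwise_of_maps_to (g := Finset.card) (t := Finset.range (n + 1))
      (fun σ hσ => Finset.mem_range.mpr
        (by have := hdim.1 σ ((Set.Finite.mem_toFinset _).mp hσ); omega))]
    apply Finset.sum_congr rfl
    intro i hi
    have hcount : (((K.toFinite.toFinset.filter fun σ => σ.card = i).card : ℚ)) =
        ((cfm1 K i : ℚ)) := by
      exact_mod_cast congrArg (fun z : ℤ => (z : ℚ)) (count_faces hK hne i)
    calc ∑ σ ∈ K.toFinite.toFinset.filter (fun σ => σ.card = i),
          (X : ℚ⟦X⟧) ^ (2 * σ.card) * (1 - (X : ℚ⟦X⟧) ^ 2) ^ (n - σ.card)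
        = ∑ _σ ∈ K.toFinite.toFinset.filter (fun σ => σ.card = i),
            (X : ℚ⟦X⟧) ^ (2 * i) * (1 - (X : ℚ⟦X⟧) ^ 2) ^ (n - i) := by
          refine Finset.sum_congr rfl fun σ hσ => ?_
          rw [(Finset.mem_filter.mp hσ).2]
      _ = (K.toFinite.toFinset.filter (fun σ => σ.card = i)).card •
            ((X : ℚ⟦X⟧) ^ (2 * i) * (1 - (X : ℚ⟦X⟧) ^ 2) ^ (n - i)) := Finset.sum_const _
      _ = _ := by
          rw [nsmul_eq_mul, show
            (((K.toFinite.toFinset.filter fun σ => σ.card = i).card : ℚ⟦X⟧)) =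
              PowerSeries.C (((K.toFinite.toFinset.filter fun σ => σ.card = i).card : ℚ))
            from (map_natCast (PowerSeries.C) _).symm, hcount, mul_assoc]
  refine ⟨hfirst, hfirst.trans ?_⟩
  have hpoly := h_poly hh
  have := congrArg (Polynomial.aeval ((X : ℚ⟦X⟧) ^ 2)) hpoly
  simp only [map_sum, map_mul, map_pow, map_sub, map_one, Polynomial.aeval_C,
    Polynomial.aeval_X] at this
  rw [show (algebraMap ℚ ℚ⟦X⟧) = PowerSeries.C from rfl] at this
  simp only [← pow_mul] at this
  exact this.symm
end

section
/- Let K^{n-1} be a pure (n-1)-dimensional simplicial complex on [m], let Λ = (λ_{ij}) be an integer n×m matrix, and set θ_i = λ_{i1}v_1 + … + λ_{im}v_m ∈ ℤ[K] for i = 1, …, n. Then θ_1, …, θ_n is a linear system of parameters in ℤ[K] (i.e., ℤ[K] is a finitely generated ℤ[θ_1,…,θ_n]-module) if and only if det Λ_σ = ±1 for every maximal simplex σ ∈ K, where Λ_σ is the n×n submatrix of Λ formed by the columns with indices in σ. -/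
namespace LsopAux

open MvPolynomial


variable {m : ℕ} {K : Set (Finset (Fin m))}

/-- A monomial whose exponent support is a non-face lies in the Stanley–Reisner ideal. -/
lemma monomial_mem_srIdeal {d : Fin m →₀ ℕ} (hd : (d.support : Finset (Fin m)) ∉ K) (c : ℤ) :
    (monomial d c : MvPolynomial (Fin m) ℤ) ∈ srIdeal ℤ K := by
  have hgen : (∏ i ∈ d.support, X i : MvPolynomial (Fin m) ℤ) ∈ srIdeal ℤ K :=
    Ideal.subset_span ⟨d.support, hd, rfl⟩
  have key : ∀ i ∈ d.support, (X i : MvPolynomial (Fin m) ℤ) ^ d i = X i * X i ^ (d i - 1) := by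
    intro i hi
    have h0 : d i ≠ 0 := Finsupp.mem_support_iff.mp hi
    conv_lhs => rw [← Nat.succ_pred_eq_of_pos (Nat.pos_of_ne_zero h0)]
    rw [pow_succ', Nat.pred_eq_sub_one]
  have heq : (monomial d c : MvPolynomial (Fin m) ℤ)
      = (∏ i ∈ d.support, X i) * (C c * ∏ i ∈ d.support, X i ^ (d i - 1)) := by
    rw [monomial_eq, Finsupp.prod, Finset.prod_congr rfl key, Finset.prod_mul_distrib]
    ring
  rw [heq]
  exact Ideal.mul_mem_right _ _ hgen

/-- A polynomial all of whose monomials have non-face support lies in `I_K`. -/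
lemma mem_srIdeal_of_forall {p : MvPolynomial (Fin m) ℤ}
    (h : ∀ d ∈ p.support, (d.support : Finset (Fin m)) ∉ K) : p ∈ srIdeal ℤ K := by
  rw [← support_sum_monomial_coeff p]
  exact Ideal.sum_mem _ fun d hd => monomial_mem_srIdeal (h d hd) _

/-- Decomposition of an exponent in the support of a product. -/
lemma exists_decomp (S : Finset (Finset (Fin m)))
    (w : Finset (Fin m) → MvPolynomial (Fin m) ℤ) :
    ∀ d ∈ (∏ τ ∈ S, w τ).support,
      ∃ e : Finset (Fin m) → (Fin m →₀ ℕ),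
        (∀ τ ∈ S, e τ ∈ (w τ).support) ∧ d = ∑ τ ∈ S, e τ := by
  classical
  induction S using Finset.induction_on with
  | empty =>
      intro d hd
      rw [Finset.prod_empty, MvPolynomial.mem_support_iff, MvPolynomial.coeff_one] at hd
      have hd0 : d = 0 := by
        by_contra h0
        rw [if_neg (fun h => h0 h.symm)] at hd
        exact hd rfl
      exact ⟨0, by simp, by simp [hd0]⟩
  | @insert a S ha ih =>
      intro d hd
      rw [Finset.prod_insert ha] at hd
      have hsub := MvPolynomial.support_mul _ _ hd
      rw [Finset.mem_add] at hsub
      obtain ⟨d1, hd1, d2, hd2, hdd⟩ := hsub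
      obtain ⟨e, he, hde⟩ := ih d2 hd2
      refine ⟨fun τ => if τ = a then d1 else e τ, ?_, ?_⟩
      · intro τ hτ
        rcases Finset.mem_insert.mp hτ with h | h
        · subst h; simpa using hd1
        · have hne : τ ≠ a := fun hc => ha (hc ▸ h)
          simpa [hne] using he τ h
      · rw [Finset.sum_insert ha, if_pos rfl, ← hdd, hde]
        congr 1
        refine Finset.sum_congr rfl fun τ hτ => ?_
        have hne : τ ≠ a := fun hc => ha (hc ▸ hτ)
        simp [hne]




/-- If `B` is a finite module over the subring generated by `θ₁, …, θₙ` and there is a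
surjection `B → kk[X]` killing all the `θᵢ`, we get a contradiction. -/
lemma not_finite_aux {B : Type} [CommRing B] {n : ℕ} (θ : Fin n → B)
    {kk : Type} [CommRing kk] [Nontrivial kk]
    (Φ : B →+* Polynomial kk) (hsurj : Function.Surjective Φ)
    (hθ0 : ∀ i, Φ (θ i) = 0)
    (hfin : Module.Finite (Algebra.adjoin ℤ (Set.range θ)) B) : False := by
  classical
  set R := Algebra.adjoin ℤ (Set.range θ) with hR
  have halg : ∀ r : R, algebraMap R B r = (r : B) := fun r => rfl
  have hconst : ∀ r : R, ∃ c : kk, Φ (r : B) = Polynomial.C c := by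
    rintro ⟨r, hr⟩
    show ∃ c : kk, Φ r = Polynomial.C c
    induction hr using Algebra.adjoin_induction with
    | mem x hx =>
        obtain ⟨i, rfl⟩ := hx
        exact ⟨0, by rw [hθ0 i, Polynomial.C_0]⟩
    | algebraMap r0 =>
        refine ⟨(r0 : kk), ?_⟩
        rw [algebraMap_int_eq]
        show Φ ((r0 : ℤ) : B) = _
        rw [map_intCast, ← Polynomial.C_eq_intCast]
    | add x y hx hy ihx ihy =>
        obtain ⟨c1, h1⟩ := ihx; obtain ⟨c2, h2⟩ := ihy
        exact ⟨c1 + c2, by rw [map_add, h1, h2, Polynomial.C_add]⟩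
    | mul x y hx hy ihx ihy =>
        obtain ⟨c1, h1⟩ := ihx; obtain ⟨c2, h2⟩ := ihy
        exact ⟨c1 * c2, by rw [map_mul, h1, h2, Polynomial.C_mul]⟩
  letI : Algebra R (Polynomial kk) := (Φ.comp (algebraMap R B)).toAlgebra
  let Φlin : B →ₗ[R] Polynomial kk :=
    { toFun := Φ
      map_add' := map_add Φ
      map_smul' := fun r x => by
        simp only [RingHom.id_apply]
        rw [Algebra.smul_def, Algebra.smul_def, RingHom.algebraMap_toAlgebra,
          RingHom.comp_apply, map_mul] }
  haveI hfin2 : Module.Finite R (Polynomial kk) := Module.Finite.of_surjective Φlin hsurj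
  obtain ⟨s, hs⟩ := Module.finite_def.mp hfin2
  set N := s.sup Polynomial.natDegree with hN
  have hdeg : ∀ x : Polynomial kk, x.natDegree ≤ N := by
    intro x
    have hx : x ∈ Submodule.span R (s : Set (Polynomial kk)) := by rw [hs]; trivial
    induction hx using Submodule.span_induction with
    | mem y hy => exact Finset.le_sup hy
    | zero => simp
    | add y z hy hz ihy ihz => exact (Polynomial.natDegree_add_le y z).trans (max_le ihy ihz)
    | smul r y hy ih =>
        obtain ⟨c, hc⟩ := hconst r
        have hry : r • y = Polynomial.C c * y := by
          rw [Algebra.smul_def, RingHom.algebraMap_toAlgebra, RingHom.comp_apply, halg, hc]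
        rw [hry]
        exact (Polynomial.natDegree_C_mul_le c y).trans ih
  have hbad := hdeg (Polynomial.X ^ (N + 1))
  rw [Polynomial.natDegree_X_pow] at hbad
  omega


lemma forward {m n : ℕ} (K : Set (Finset (Fin m))) (hK : IsSimplicialComplex K)
    (Λ : Matrix (Fin n) (Fin m) ℤ) (θ : Fin n → SRRing ℤ K)
    (hθ : ∀ i, θ i = Ideal.Quotient.mk (srIdeal ℤ K)
      (∑ j : Fin m, MvPolynomial.C (Λ i j) * MvPolynomial.X j))
    (hfin : Module.Finite (Algebra.adjoin ℤ (Set.range θ)) (SRRing ℤ K))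
    (σ : Finset (Fin m)) (hσK : σ ∈ K) (hcard : σ.card = n) :
    (Λ.submatrix id (fun j : Fin n => σ.orderEmbOfFin hcard j)).det = 1 ∨
    (Λ.submatrix id (fun j : Fin n => σ.orderEmbOfFin hcard j)).det = -1 := by
  by_contra hdet
  push_neg at hdet
  obtain ⟨hd1, hd2⟩ := hdet
  classical
  set A : Matrix (Fin n) (Fin n) ℤ :=
    Λ.submatrix id (fun j : Fin n => σ.orderEmbOfFin hcard j) with hA
  set p : ℕ := A.det.natAbs.minFac with hpdef
  have hp : p.Prime := by
    apply Nat.minFac_prime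
    intro h1
    rcases Int.natAbs_eq_iff.mp h1 with h | h
    · exact hd1 (by simpa using h)
    · exact hd2 (by simpa using h)
  haveI : Fact p.Prime := ⟨hp⟩
  have hpd : (p : ℤ) ∣ A.det :=
    dvd_trans (Int.natCast_dvd_natCast.mpr (Nat.minFac_dvd _)) (Int.natAbs_dvd.mpr dvd_rfl)
  set M : Matrix (Fin n) (Fin n) (ZMod p) := A.map (Int.castRingHom (ZMod p)) with hM
  have hMdet : M.det = 0 := by
    rw [hM, ← RingHom.mapMatrix_apply, ← RingHom.map_det]
    simp only [Int.coe_castRingHom]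
    exact (ZMod.intCast_zmod_eq_zero_iff_dvd _ _).mpr hpd
  obtain ⟨a, ha0, hMa⟩ := Matrix.exists_mulVec_eq_zero_iff.mpr hMdet
  set g0 : Fin m → Polynomial (ZMod p) := fun l =>
    if hl : l ∈ σ then Polynomial.C (a ((σ.orderIsoOfFin hcard).symm ⟨l, hl⟩)) * Polynomial.X
    else 0 with hg0
  set φ : MvPolynomial (Fin m) ℤ →ₐ[ℤ] Polynomial (ZMod p) := MvPolynomial.aeval g0 with hφ
  have hle : srIdeal ℤ K ≤ RingHom.ker (φ : MvPolynomial (Fin m) ℤ →+* Polynomial (ZMod p)) := by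
    rw [srIdeal, Ideal.span_le]
    rintro q ⟨τ, hτ, rfl⟩
    have hex : ∃ l ∈ τ, l ∉ σ := by
      by_contra hc
      push_neg at hc
      exact hτ (hK σ hσK τ hc)
    obtain ⟨l, hlτ, hlσ⟩ := hex
    simp only [SetLike.mem_coe, RingHom.mem_ker, RingHom.coe_coe]
    rw [map_prod]
    refine Finset.prod_eq_zero hlτ ?_
    rw [hφ, MvPolynomial.aeval_X]
    simp only [hg0]
    rw [dif_neg hlσ]
  set Φ : SRRing ℤ K →+* Polynomial (ZMod p) :=
    Ideal.Quotient.lift (srIdeal ℤ K) (φ : MvPolynomial (Fin m) ℤ →+* Polynomial (ZMod p))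
      (fun x hx => RingHom.mem_ker.mp (hle hx)) with hΦ
  have hΦmk : ∀ q, Φ (Ideal.Quotient.mk (srIdeal ℤ K) q) = φ q := fun q =>
    Ideal.Quotient.lift_mk _ _ _
  have hiso : ∀ j' : Fin n, ((σ.orderIsoOfFin hcard j' : Fin m)) = σ.orderEmbOfFin hcard j' :=
    fun j' => Finset.coe_orderIsoOfFin_apply σ hcard j'
  have hg0emb : ∀ j' : Fin n,
      g0 (σ.orderEmbOfFin hcard j') = Polynomial.C (a j') * Polynomial.X := by
    intro j'
    have hmem : σ.orderEmbOfFin hcard j' ∈ σ := Finset.orderEmbOfFin_mem σ hcard j'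
    simp only [hg0]
    rw [dif_pos hmem]
    have hsub : (⟨σ.orderEmbOfFin hcard j', hmem⟩ : {x // x ∈ σ}) = σ.orderIsoOfFin hcard j' :=
      Subtype.ext (hiso j').symm
    have hsymm : (σ.orderIsoOfFin hcard).symm ⟨σ.orderEmbOfFin hcard j', hmem⟩ = j' := by
      rw [hsub]; exact OrderIso.symm_apply_apply _ _
    rw [hsymm]
  have hΦθ : ∀ i, Φ (θ i) = 0 := by
    intro i
    rw [hθ i, hΦmk, map_sum]
    have hterm : ∀ l : Fin m, φ (MvPolynomial.C (Λ i l) * MvPolynomial.X l)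
        = Polynomial.C ((Λ i l : ZMod p)) * g0 l := by
      intro l
      rw [map_mul]
      congr 1
      · rw [hφ, MvPolynomial.aeval_C]
        exact (eq_intCast _ _).trans (Polynomial.C_eq_intCast _).symm
      · rw [hφ, MvPolynomial.aeval_X]
    rw [Finset.sum_congr rfl fun l _ => hterm l]
    have h2 : ∑ l : Fin m, Polynomial.C ((Λ i l : ZMod p)) * g0 l
        = ∑ l ∈ σ, Polynomial.C ((Λ i l : ZMod p)) * g0 l := by
      refine (Finset.sum_subset (Finset.subset_univ σ) (fun l _ hl => ?_)).symm
      simp only [hg0]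
      rw [dif_neg hl, mul_zero]
    rw [h2]
    have h5 : ∑ l ∈ σ, Polynomial.C ((Λ i l : ZMod p)) * g0 l
        = ∑ j' : Fin n, Polynomial.C ((Λ i (σ.orderEmbOfFin hcard j') : ZMod p))
            * g0 (σ.orderEmbOfFin hcard j') := by
      rw [← Finset.sum_coe_sort σ (fun l => Polynomial.C ((Λ i l : ZMod p)) * g0 l)]
      rw [← Function.Bijective.sum_comp (σ.orderIsoOfFin hcard).bijective
        (fun x => Polynomial.C ((Λ i (x : Fin m) : ZMod p)) * g0 (x : Fin m))]
      exact Finset.sum_congr rfl fun j' _ => by rw [hiso j']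
    rw [h5]
    have h3 : ∀ j' : Fin n,
        Polynomial.C ((Λ i (σ.orderEmbOfFin hcard j') : ZMod p)) * g0 (σ.orderEmbOfFin hcard j')
          = Polynomial.C (M i j' * a j') * Polynomial.X := by
      intro j'
      rw [hg0emb, ← mul_assoc, ← Polynomial.C_mul]
      rfl
    rw [Finset.sum_congr rfl fun j' _ => h3 j']
    rw [← Finset.sum_mul, ← map_sum]
    have h4 : ∑ j' : Fin n, M i j' * a j' = 0 := by
      have := congrFun hMa i
      simpa [Matrix.mulVec, dotProduct] using this
    rw [h4, Polynomial.C_0, zero_mul]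
  -- surjectivity of Φ
  have hCmem : ∀ cc : ZMod p, Polynomial.C cc ∈ Φ.range := by
    intro cc
    obtain ⟨z, rfl⟩ := ZMod.intCast_surjective cc
    refine ⟨(z : SRRing ℤ K), ?_⟩
    rw [map_intCast]
    exact (Polynomial.C_eq_intCast z).symm
  obtain ⟨j0, hj0⟩ : ∃ j0, a j0 ≠ 0 := by
    by_contra hc; push_neg at hc; exact ha0 (funext hc)
  have hXmem : Polynomial.X ∈ Φ.range := by
    have h1 : Polynomial.C (a j0) * Polynomial.X ∈ Φ.range := by
      refine ⟨Ideal.Quotient.mk _ (MvPolynomial.X (σ.orderEmbOfFin hcard j0)), ?_⟩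
      rw [hΦmk, hφ, MvPolynomial.aeval_X, hg0emb]
    obtain ⟨y, hy⟩ := h1
    obtain ⟨z, hz⟩ := hCmem (a j0)⁻¹
    refine ⟨z * y, ?_⟩
    rw [map_mul, hy, hz, ← mul_assoc, ← Polynomial.C_mul, inv_mul_cancel₀ hj0,
      Polynomial.C_1, one_mul]
  have hsurj : Function.Surjective Φ := by
    intro q
    rw [← RingHom.mem_range]
    induction q using Polynomial.induction_on with
    | C cc => exact hCmem cc
    | add p1 p2 h1 h2 => exact add_mem h1 h2
    | monomial n0 cc ih =>
        rw [pow_succ, ← mul_assoc]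
        exact mul_mem ih hXmem
  exact not_finite_aux θ Φ hsurj hΦθ hfin


set_option maxHeartbeats 1000000 in
lemma backward {m n : ℕ} (K : Set (Finset (Fin m))) (hK : IsSimplicialComplex K)
    (hpure : ∀ σ ∈ K, ∃ τ ∈ K, σ ⊆ τ ∧ τ.card = n)
    (Λ : Matrix (Fin n) (Fin m) ℤ) (θ : Fin n → SRRing ℤ K)
    (hθ : ∀ i, θ i = Ideal.Quotient.mk (srIdeal ℤ K)
      (∑ j : Fin m, MvPolynomial.C (Λ i j) * MvPolynomial.X j))
    (hdet : ∀ σ : Finset (Fin m), σ ∈ K → (hcard : σ.card = n) →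
        (Λ.submatrix id (fun j : Fin n => σ.orderEmbOfFin hcard j)).det = 1 ∨
        (Λ.submatrix id (fun j : Fin n => σ.orderEmbOfFin hcard j)).det = -1) :
    Module.Finite (Algebra.adjoin ℤ (Set.range θ)) (SRRing ℤ K) := by
  classical
  set R := Algebra.adjoin ℤ (Set.range θ) with hR
  have halg : ∀ r : R, algebraMap R (SRRing ℤ K) r = (r : SRRing ℤ K) := fun r => rfl
  have hint : ∀ j : Fin m,
      IsIntegral R (Ideal.Quotient.mk (srIdeal ℤ K) (MvPolynomial.X j)) := by
    intro j
    set S : Finset (Finset (Fin m)) :=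
      Finset.univ.filter (fun τ => τ ∈ K ∧ τ.card = n ∧ j ∈ τ) with hS
    have hW : ∀ τ : Finset (Fin m), ∃ w : MvPolynomial (Fin m) ℤ,
        (∀ d ∈ w.support, ∃ l, l ∉ τ ∧ d = Finsupp.single l 1) ∧
        (τ ∈ S → Ideal.Quotient.mk (srIdeal ℤ K) (MvPolynomial.X j - w) ∈ R) := by
      intro τ
      by_cases hτS : τ ∈ S
      swap
      · exact ⟨0, by simp, fun h => absurd h hτS⟩
      have hτK : τ ∈ K := ((Finset.mem_filter.mp hτS).2).1
      have hcn : τ.card = n := ((Finset.mem_filter.mp hτS).2).2.1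
      have hjτ : j ∈ τ := ((Finset.mem_filter.mp hτS).2).2.2
      set A : Matrix (Fin n) (Fin n) ℤ :=
        Λ.submatrix id (fun i => τ.orderEmbOfFin hcn i) with hA
      have hu : IsUnit A.det := Int.isUnit_iff.mpr (hdet τ hτK hcn)
      have hBA : A⁻¹ * A = 1 := Matrix.nonsing_inv_mul A hu
      set pos : Fin n := (τ.orderIsoOfFin hcn).symm ⟨j, hjτ⟩ with hpos
      set c : Fin n → ℤ := fun i => A⁻¹ pos i with hc
      set b : Fin m → ℤ := fun l => (if j = l then 1 else 0) - ∑ i, c i * Λ i l with hb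
      have hbτ : ∀ l ∈ τ, b l = 0 := by
        intro l hl
        set j2 : Fin n := (τ.orderIsoOfFin hcn).symm ⟨l, hl⟩ with hj2
        have hemb : τ.orderEmbOfFin hcn j2 = l := by
          rw [← Finset.coe_orderIsoOfFin_apply, hj2, OrderIso.apply_symm_apply]
        have h2 : ∑ i, c i * Λ i l = (A⁻¹ * A) pos j2 := by
          rw [Matrix.mul_apply]
          refine Finset.sum_congr rfl fun i _ => ?_
          congr 1
          rw [hA, Matrix.submatrix_apply, hemb]
          rfl
        have hiff : (j = l) ↔ (pos = j2) := by
          constructor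
          · intro h
            rw [hpos, hj2]
            congr 1
            exact Subtype.ext h
          · intro h
            have h3 : ((τ.orderIsoOfFin hcn) pos : Fin m) = ((τ.orderIsoOfFin hcn) j2 : Fin m) := by
              rw [h]
            rw [hpos, hj2, OrderIso.apply_symm_apply, OrderIso.apply_symm_apply] at h3
            exact h3
        rw [hb]
        simp only
        rw [h2, hBA, Matrix.one_apply]
        by_cases hjl : j = l
        · rw [if_pos hjl, if_pos (hiff.mp hjl)]; ring
        · rw [if_neg hjl, if_neg (fun h => hjl (hiff.mpr h))]; ring
      set w : MvPolynomial (Fin m) ℤ :=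
        ∑ l : Fin m, MvPolynomial.C (b l) * MvPolynomial.X l with hw
      refine ⟨w, ?_, ?_⟩
      · intro d hd
        rw [hw] at hd
        have hmem := MvPolynomial.support_sum hd
        rw [Finset.mem_biUnion] at hmem
        obtain ⟨l, -, hdl⟩ := hmem
        have hcx : (MvPolynomial.C (b l) * MvPolynomial.X l : MvPolynomial (Fin m) ℤ)
            = MvPolynomial.monomial (Finsupp.single l 1) (b l) := by
          rw [MvPolynomial.X, MvPolynomial.C_mul_monomial, mul_one]
        rw [hcx, MvPolynomial.support_monomial] at hdl
        split_ifs at hdl with hbl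
        · simp at hdl
        · rw [Finset.mem_singleton] at hdl
          exact ⟨l, fun hl => hbl (hbτ l hl), hdl⟩
      · intro _
        have hXw : MvPolynomial.X j - w
            = ∑ i : Fin n, MvPolynomial.C (c i)
                * (∑ l : Fin m, MvPolynomial.C (Λ i l) * MvPolynomial.X l) := by
          have hswap : ∑ i : Fin n, MvPolynomial.C (c i)
                * (∑ l : Fin m, MvPolynomial.C (Λ i l) * MvPolynomial.X l)
              = ∑ l : Fin m, MvPolynomial.C (∑ i : Fin n, c i * Λ i l) * MvPolynomial.X l := by
            calc ∑ i : Fin n, MvPolynomial.C (c i)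
                  * (∑ l : Fin m, MvPolynomial.C (Λ i l) * MvPolynomial.X l)
                = ∑ i : Fin n, ∑ l : Fin m,
                    MvPolynomial.C (c i * Λ i l) * MvPolynomial.X l := by
                  refine Finset.sum_congr rfl fun i _ => ?_
                  rw [Finset.mul_sum]
                  refine Finset.sum_congr rfl fun l _ => ?_
                  rw [← mul_assoc, ← MvPolynomial.C_mul]
              _ = ∑ l : Fin m, ∑ i : Fin n,
                    MvPolynomial.C (c i * Λ i l) * MvPolynomial.X l := Finset.sum_comm
              _ = ∑ l : Fin m, MvPolynomial.C (∑ i : Fin n, c i * Λ i l)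
                    * MvPolynomial.X l := by
                  refine Finset.sum_congr rfl fun l _ => ?_
                  rw [← Finset.sum_mul, ← map_sum]
          rw [hswap]
          have hXj : (MvPolynomial.X j : MvPolynomial (Fin m) ℤ)
              = ∑ l : Fin m, MvPolynomial.C (if j = l then (1:ℤ) else 0) * MvPolynomial.X l := by
            rw [Finset.sum_eq_single j]
            · rw [if_pos rfl, MvPolynomial.C_1, one_mul]
            · intro l _ hlj
              rw [if_neg (fun h => hlj h.symm), MvPolynomial.C_0, zero_mul]
            · intro h; exact absurd (Finset.mem_univ j) h
          nth_rewrite 1 [hXj]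
          rw [hw, ← Finset.sum_sub_distrib]
          refine Finset.sum_congr rfl fun l _ => ?_
          rw [← sub_mul, ← MvPolynomial.C_sub]
          congr 2
          rw [hb]
          ring
        rw [hXw, map_sum]
        refine sum_mem fun i _ => ?_
        rw [map_mul]
        refine mul_mem ?_ ?_
        · have hCc : (Ideal.Quotient.mk (srIdeal ℤ K)) (MvPolynomial.C (c i))
              = ((c i : ℤ) : SRRing ℤ K) := by
            have h1 : (MvPolynomial.C (c i) : MvPolynomial (Fin m) ℤ)
                = ((c i : ℤ) : MvPolynomial (Fin m) ℤ) := by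
              rw [← map_intCast (MvPolynomial.C : ℤ →+* MvPolynomial (Fin m) ℤ) (c i),
                Int.cast_id]
            rw [h1, map_intCast]
          rw [hCc]
          exact intCast_mem R _
        · rw [← hθ i]
          exact Algebra.subset_adjoin ⟨i, rfl⟩
    choose W hWsupp hWmem using hW
    set P : MvPolynomial (Fin m) ℤ := MvPolynomial.X j * ∏ τ ∈ S, W τ with hP
    have hPmem : P ∈ srIdeal ℤ K := by
      apply mem_srIdeal_of_forall
      intro d hd
      rw [hP] at hd
      have hsub := MvPolynomial.support_mul _ _ hd
      rw [Finset.mem_add] at hsub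
      obtain ⟨d1, hd1, d2, hd2, hdd⟩ := hsub
      rw [MvPolynomial.support_X, Finset.mem_singleton] at hd1
      obtain ⟨e, he, hde⟩ := exists_decomp S W d2 hd2
      intro hdK
      obtain ⟨τ, hτK, hsubτ, hτn⟩ := hpure _ hdK
      have hdj : d j = 1 + d2 j := by
        rw [← hdd, hd1]
        simp
      have hjd : j ∈ d.support := Finsupp.mem_support_iff.mpr (by omega)
      have hjτ : j ∈ τ := hsubτ hjd
      have hτS : τ ∈ S := by
        rw [hS]
        simp only [Finset.mem_filter, Finset.mem_univ, true_and]
        exact ⟨hτK, hτn, hjτ⟩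
      obtain ⟨l, hlτ, hel⟩ := hWsupp τ (e τ) (he τ hτS)
      have hld : l ∈ d.support := by
        rw [Finsupp.mem_support_iff]
        have h1 : (e τ) l = 1 := by rw [hel]; simp
        have h2 : (e τ) l ≤ d2 l := by
          rw [hde, Finsupp.finset_sum_apply]
          exact Finset.single_le_sum (f := fun τ' => e τ' l) (fun τ' _ => Nat.zero_le _) hτS
        have h3 : d l = d1 l + d2 l := by rw [← hdd]; simp
        omega
      exact hlτ (hsubτ hld)
    refine ⟨Polynomial.X * ∏ τ ∈ S.attach,
      (Polynomial.X - Polynomial.C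
        (⟨Ideal.Quotient.mk (srIdeal ℤ K) (MvPolynomial.X j - W τ.1), hWmem τ.1 τ.2⟩ : R)),
      ?_, ?_⟩
    · exact (Polynomial.monic_X).mul
        (Polynomial.monic_prod_of_monic _ _ fun τ _ => Polynomial.monic_X_sub_C _)
    · rw [← Polynomial.aeval_def]
      rw [map_mul, Polynomial.aeval_X, map_prod]
      have hfac : ∀ τ : {x // x ∈ S},
          Polynomial.aeval (Ideal.Quotient.mk (srIdeal ℤ K) (MvPolynomial.X j))
            (Polynomial.X - Polynomial.C
              (⟨Ideal.Quotient.mk (srIdeal ℤ K) (MvPolynomial.X j - W τ.1),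
                hWmem τ.1 τ.2⟩ : R))
            = Ideal.Quotient.mk (srIdeal ℤ K) (W τ.1) := by
        intro τ
        rw [map_sub, Polynomial.aeval_X, Polynomial.aeval_C, halg]
        show _ - Ideal.Quotient.mk (srIdeal ℤ K) (MvPolynomial.X j - W τ.1) = _
        rw [map_sub]
        ring
      rw [Finset.prod_congr rfl fun τ _ => hfac τ]
      rw [← map_prod, ← map_mul]
      rw [Finset.prod_attach S W]
      exact Ideal.Quotient.eq_zero_iff_mem.mpr hPmem
  have hFG := fg_adjoin_of_finite (R := R)
    (Set.finite_range (fun j : Fin m => Ideal.Quotient.mk (srIdeal ℤ K) (MvPolynomial.X j)))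
    (by rintro x ⟨j, rfl⟩; exact hint j)
  have htop : Algebra.adjoin R
      (Set.range fun j : Fin m => Ideal.Quotient.mk (srIdeal ℤ K) (MvPolynomial.X j)) = ⊤ := by
    rw [eq_top_iff]
    rintro x -
    have hxZ : x ∈ Algebra.adjoin ℤ
        (Set.range fun j : Fin m => Ideal.Quotient.mk (srIdeal ℤ K) (MvPolynomial.X j)) := by
      have h1 : Algebra.adjoin ℤ
          (Set.range fun j : Fin m => Ideal.Quotient.mk (srIdeal ℤ K) (MvPolynomial.X j)) = ⊤ := by
        have h3 : Set.range (fun j : Fin m => Ideal.Quotient.mk (srIdeal ℤ K) (MvPolynomial.X j))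
            = (Ideal.Quotient.mkₐ ℤ (srIdeal ℤ K)) ''
                (Set.range (MvPolynomial.X : Fin m → MvPolynomial (Fin m) ℤ)) := by
          rw [← Set.range_comp]; rfl
        rw [h3, ← AlgHom.map_adjoin, MvPolynomial.adjoin_range_X, Algebra.map_top]
        exact (AlgHom.range_eq_top _).mpr (Ideal.Quotient.mkₐ_surjective ℤ _)
      rw [h1]; trivial
    induction hxZ using Algebra.adjoin_induction with
    | mem y hy => exact Algebra.subset_adjoin hy
    | algebraMap r =>
        rw [eq_intCast]
        show ((r : ℤ) : SRRing ℤ K) ∈ _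
        exact intCast_mem _ _
    | add y z hy hz ihy ihz => exact add_mem ihy ihz
    | mul y z hy hz ihy ihz => exact mul_mem ihy ihz
  rw [htop, Algebra.top_toSubmodule] at hFG; rw [Module.finite_def]
  exact hFG


end LsopAux

/-- **Linear systems of parameters and unimodularity.** Let `K^{n-1}` be a pure
`(n-1)`-dimensional simplicial complex on `[m]`, let `Λ` be an integer `n × m` matrix
and let `θᵢ = λ_{i1} v₁ + ⋯ + λ_{im} v_m ∈ ℤ[K]`. Then `θ₁, …, θₙ` is an lsop in
`ℤ[K]` (that is, `ℤ[K]` is a finitely generated module over the subring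
`ℤ[θ₁, …, θₙ]`) if and only if `det Λ_σ = ±1` for every maximal simplex `σ ∈ K`. -/
theorem lsop_iff_unimodular {m n : ℕ} (K : Set (Finset (Fin m)))
    (hK : IsSimplicialComplex K) (hne : K.Nonempty)
    (hdim : ∀ σ ∈ K, σ.card ≤ n)
    (hpure : ∀ σ ∈ K, ∃ τ ∈ K, σ ⊆ τ ∧ τ.card = n)
    (Λ : Matrix (Fin n) (Fin m) ℤ)
    (θ : Fin n → SRRing ℤ K)
    (hθ : ∀ i, θ i = Ideal.Quotient.mk (srIdeal ℤ K)
      (∑ j : Fin m, MvPolynomial.C (Λ i j) * MvPolynomial.X j)) :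
    Module.Finite (Algebra.adjoin ℤ (Set.range θ)) (SRRing ℤ K) ↔
      ∀ σ : Finset (Fin m), σ ∈ K → (hcard : σ.card = n) →
        (Λ.submatrix id (fun j : Fin n => σ.orderEmbOfFin hcard j)).det = 1 ∨
        (Λ.submatrix id (fun j : Fin n => σ.orderEmbOfFin hcard j)).det = -1 := by
  constructor
  · intro hfin σ hσK hcard
    exact LsopAux.forward K hK Λ θ hθ hfin σ hσK hcard
  · intro hdet
    exact LsopAux.backward K hK hpure Λ θ hθ hdet
end

section
/- For any simplicial complex K on [m], the moment-angle complex Z_K is a deformation retract of the coordinate subspace arrangement complement U(K) = ℂ^m ∖ ⋃_{ω ∉ K} L_ω, where L_ω = {(z_1,…,z_m) ∈ ℂ^m : z_i = 0 for all i ∈ ω}; moreover the deformation retraction can be chosen equivariant with respect to the coordinatewise action of the torus T^m = {(z_1,…,z_m) : |z_i| = 1} on ℂ^m. -/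
/-- `B_ω ⊆ (D²)^m ⊆ ℂ^m`: the set of points of the unit polydisc with `|z_i| = 1`
for `i ∉ ω`. -/
def polydiscBlock {m : ℕ} (ω : Finset (Fin m)) : Set (Fin m → ℂ) :=
  {z | (∀ i, ‖z i‖ ≤ 1) ∧ ∀ i, i ∉ ω → ‖z i‖ = 1}

/-- The moment-angle complex `Z_K = ⋃_{σ ∈ K} B_σ ⊆ ℂ^m`. -/
def momentAngleCplx {m : ℕ} (K : Set (Finset (Fin m))) : Set (Fin m → ℂ) :=
  ⋃ σ ∈ K, polydiscBlock σ

/-- The geometric realization `|K| ⊆ ℝ^m` of a simplicial complex `K` on `[m]`. -/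
def geomReal {m : ℕ} (K : Set (Finset (Fin m))) : Set (Fin m → ℝ) :=
  ⋃ σ ∈ K, convexHull ℝ ((fun i : Fin m => (Pi.single i (1 : ℝ) : Fin m → ℝ)) ''
    (σ : Set (Fin m)))

/-- The complement `U(K) = ℂ^m ∖ ⋃_{ω ∉ K} L_ω` of the arrangement of coordinate
subspaces `L_ω = {z : z_i = 0 ∀ i ∈ ω}` corresponding to the non-faces of `K`. -/
def coordArrComplement {m : ℕ} (K : Set (Finset (Fin m))) : Set (Fin m → ℂ) :=
  Set.univ \ ⋃ ω ∈ {ω : Finset (Fin m) | ω ∉ K}, {z : Fin m → ℂ | ∀ i ∈ ω, z i = 0}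

/- ### Auxiliary constructions for the deformation retraction -/

/-- The maximum of `|z_i|` over `i ∈ ω` (junk value `1` if `ω = ∅`). -/
noncomputable def madMaxAbs {m : ℕ} (ω : Finset (Fin m)) (z : Fin m → ℂ) : ℝ :=
  if h : ω.Nonempty then ω.sup' h (fun i => ‖z i‖) else 1

open Classical in
/-- The finset of nonempty non-faces of `K`. -/
noncomputable def madNonfaces {m : ℕ} (K : Set (Finset (Fin m))) : Finset (Finset (Fin m)) :=
  Finset.univ.filter (fun ω => ω ∉ K ∧ ω.Nonempty)

/-- The threshold `E(z) = min(1, min_{ω ∉ K} max_{i ∈ ω} |z_i|)`. -/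
noncomputable def madE {m : ℕ} (K : Set (Finset (Fin m))) (z : Fin m → ℂ) : ℝ :=
  if h : (madNonfaces K).Nonempty
  then min 1 ((madNonfaces K).inf' h (fun ω => madMaxAbs ω z))
  else 1

/-- The deformation retraction: `H(t,z)_i = z_i ((1-t) + t / max(|z_i|, E(z)))`. -/
noncomputable def madH {m : ℕ} (K : Set (Finset (Fin m))) : ℝ × (Fin m → ℂ) → (Fin m → ℂ) :=
  fun p i => p.2 i * (((1 - p.1) + p.1 * (max (‖p.2 i‖) (madE K p.2))⁻¹ : ℝ) : ℂ)

lemma mem_madNonfaces {m : ℕ} {K : Set (Finset (Fin m))} {ω : Finset (Fin m)} :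
    ω ∈ madNonfaces K ↔ ω ∉ K ∧ ω.Nonempty := by
  simp [madNonfaces]

lemma mem_coordArrComplement {m : ℕ} {K : Set (Finset (Fin m))} {z : Fin m → ℂ} :
    z ∈ coordArrComplement K ↔ ∀ ω : Finset (Fin m), ω ∉ K → ∃ i ∈ ω, z i ≠ 0 := by
  simp only [coordArrComplement, Set.mem_diff, Set.mem_univ, true_and, Set.mem_iUnion,
    Set.mem_setOf_eq, not_exists]
  push_neg
  rfl

lemma mem_momentAngleCplx {m : ℕ} {K : Set (Finset (Fin m))} {z : Fin m → ℂ} :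
    z ∈ momentAngleCplx K ↔ ∃ σ ∈ K, (∀ i, ‖z i‖ ≤ 1) ∧
      ∀ i, i ∉ σ → ‖z i‖ = 1 := by
  simp only [momentAngleCplx, polydiscBlock, Set.mem_iUnion, Set.mem_setOf_eq]
  tauto

lemma madMaxAbs_eq {m : ℕ} {ω : Finset (Fin m)} (h : ω.Nonempty) (z : Fin m → ℂ) :
    madMaxAbs ω z = ω.sup' h (fun i => ‖z i‖) := dif_pos h

lemma madE_le_one {m : ℕ} (K : Set (Finset (Fin m))) (z : Fin m → ℂ) : madE K z ≤ 1 := by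
  unfold madE; split_ifs with h
  · exact min_le_left _ _
  · exact le_refl 1

lemma madE_pos {m : ℕ} {K : Set (Finset (Fin m))} {z : Fin m → ℂ}
    (hz : z ∈ coordArrComplement K) : 0 < madE K z := by
  unfold madE; split_ifs with h
  · refine lt_min one_pos ?_
    refine (Finset.lt_inf'_iff h).mpr fun ω hω => ?_
    obtain ⟨hωK, hωne⟩ := mem_madNonfaces.mp hω
    obtain ⟨i, hi, hzi⟩ := mem_coordArrComplement.mp hz ω hωK
    calc (0:ℝ) < ‖z i‖ := norm_pos_iff.mpr hzi
      _ ≤ _ := by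
        rw [madMaxAbs_eq hωne]
        exact Finset.le_sup' (fun i => ‖z i‖) hi
  · exact one_pos

lemma madE_continuous {m : ℕ} (K : Set (Finset (Fin m))) :
    Continuous (fun z => madE K z) := by
  unfold madE
  split_ifs with h
  · refine continuous_const.min ?_
    refine Continuous.finset_inf'_apply h ?_
    intro ω hω
    obtain ⟨-, hωne⟩ := mem_madNonfaces.mp hω
    have he : (fun z : Fin m → ℂ => madMaxAbs ω z)
        = fun z => ω.sup' hωne (fun i => ‖z i‖) := by
      funext z; exact madMaxAbs_eq hωne z
    rw [show madMaxAbs ω = fun z : Fin m → ℂ => ω.sup' hωne (fun i => ‖z i‖) from he]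
    exact Continuous.finset_sup'_apply hωne
      (fun i _ => continuous_norm.comp (continuous_apply i))
  · exact continuous_const

/-- On the moment-angle complex, the threshold equals `1`. -/
lemma madE_eq_one_of_mem {m : ℕ} {K : Set (Finset (Fin m))} (hK : IsSimplicialComplex K)
    {z : Fin m → ℂ} (hz : z ∈ momentAngleCplx K) : madE K z = 1 := by
  obtain ⟨σ, hσK, hle, hone⟩ := mem_momentAngleCplx.mp hz
  unfold madE; split_ifs with h
  · refine min_eq_left ?_
    rw [Finset.le_inf'_iff]
    intro ω hω
    obtain ⟨hωK, hωne⟩ := mem_madNonfaces.mp hω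
    have hns : ¬ ω ⊆ σ := fun hsub => hωK (hK σ hσK ω hsub)
    obtain ⟨i, hi, hiσ⟩ := Finset.not_subset.mp hns
    rw [madMaxAbs_eq hωne]
    calc (1:ℝ) = ‖z i‖ := (hone i hiσ).symm
      _ ≤ _ := Finset.le_sup' (fun i => ‖z i‖) hi
  · rfl

/-- The scalar factor in `madH` is positive for `t ∈ [0,1]` and `z ∈ U(K)`. -/
lemma madH_scalar_pos {m : ℕ} {K : Set (Finset (Fin m))} {t : ℝ} (ht : t ∈ Set.Icc (0:ℝ) 1)
    {z : Fin m → ℂ} (hz : z ∈ coordArrComplement K) (i : Fin m) :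
    0 < (1 - t) + t * (max (‖z i‖) (madE K z))⁻¹ := by
  have hmax : 0 < max (‖z i‖) (madE K z) :=
    lt_of_lt_of_le (madE_pos hz) (le_max_right _ _)
  have hinv : 0 < (max (‖z i‖) (madE K z))⁻¹ := inv_pos.mpr hmax
  rcases eq_or_lt_of_le ht.2 with h1 | h1
  · rw [h1]; simpa using hinv
  · have h2 : 0 < 1 - t := by linarith
    have h3 : 0 ≤ t * (max (‖z i‖) (madE K z))⁻¹ :=
      mul_nonneg ht.1 hinv.le
    linarith

/-- **The moment-angle complex is an equivariant deformation retract of the coordinate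
subspace arrangement complement.** There is a homotopy `H`, defined on `[0,1] × U(K)`
and taking values in `U(K)`, which starts at the identity, ends in `Z_K ⊆ U(K)`, fixes
`Z_K` pointwise at all times, and commutes with the coordinatewise action of the torus
`T^m = {g ∈ ℂ^m : |g_i| = 1}`. -/
theorem momentAngle_deformation_retract_of_complement {m : ℕ}
    (K : Set (Finset (Fin m))) (hK : IsSimplicialComplex K) :
    momentAngleCplx K ⊆ coordArrComplement K ∧
    ∃ H : ℝ × (Fin m → ℂ) → (Fin m → ℂ),
      ContinuousOn H (Set.Icc (0 : ℝ) 1 ×ˢ coordArrComplement K) ∧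
      (∀ z ∈ coordArrComplement K, H (0, z) = z) ∧
      (∀ z ∈ coordArrComplement K, H (1, z) ∈ momentAngleCplx K) ∧
      (∀ t ∈ Set.Icc (0 : ℝ) 1, ∀ z ∈ coordArrComplement K,
        H (t, z) ∈ coordArrComplement K) ∧
      (∀ t ∈ Set.Icc (0 : ℝ) 1, ∀ z ∈ momentAngleCplx K, H (t, z) = z) ∧
      (∀ g : Fin m → ℂ, (∀ i, ‖g i‖ = 1) →
        ∀ t ∈ Set.Icc (0 : ℝ) 1, ∀ z ∈ coordArrComplement K,
          H (t, fun i => g i * z i) = fun i => g i * H (t, z) i) := by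
  classical
  constructor
  · -- Z_K ⊆ U(K)
    intro z hz
    obtain ⟨σ, hσK, hle, hone⟩ := mem_momentAngleCplx.mp hz
    rw [mem_coordArrComplement]
    intro ω hωK
    have hns : ¬ ω ⊆ σ := fun hsub => hωK (hK σ hσK ω hsub)
    obtain ⟨i, hi, hiσ⟩ := Finset.not_subset.mp hns
    refine ⟨i, hi, ?_⟩
    intro h0
    have := hone i hiσ
    rw [h0] at this
    simp at this
  · refine ⟨madH K, ?_, ?_, ?_, ?_, ?_, ?_⟩
    · -- continuity
      rw [continuousOn_pi]
      intro i
      refine ContinuousOn.mul ((continuous_apply i).comp continuous_snd).continuousOn ?_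
      refine Complex.continuous_ofReal.comp_continuousOn ?_
      refine ContinuousOn.add ((continuous_const.sub continuous_fst).continuousOn) ?_
      refine ContinuousOn.mul continuous_fst.continuousOn ?_
      refine ContinuousOn.inv₀ ?_ ?_
      · exact ((continuous_norm.comp ((continuous_apply i).comp
          continuous_snd)).max ((madE_continuous K).comp continuous_snd)).continuousOn
      · rintro ⟨t, z⟩ ⟨-, hz⟩
        exact ne_of_gt (lt_of_lt_of_le (madE_pos hz) (le_max_right _ _))
    · -- H(0,z) = z
      intro z _
      funext i
      simp [madH]
    · -- H(1,z) ∈ Z_K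
      intro z hz
      have hE := madE_pos hz
      rw [mem_momentAngleCplx]
      have hempty : ∅ ∈ K := by
        by_contra h
        obtain ⟨i, hi, -⟩ := mem_coordArrComplement.mp hz ∅ h
        exact Finset.notMem_empty i hi
      set σ : Finset (Fin m) := Finset.univ.filter (fun i => ‖z i‖ < madE K z)
        with hσdef
      have hσK : σ ∈ K := by
        by_contra hσ
        have hσne : σ.Nonempty := by
          rcases Finset.eq_empty_or_nonempty σ with h | h
          · exact absurd hempty (by rwa [h] at hσ)
          · exact h
        have hσN : σ ∈ madNonfaces K := mem_madNonfaces.mpr ⟨hσ, hσne⟩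
        have hN : (madNonfaces K).Nonempty := ⟨σ, hσN⟩
        have h1 : madE K z ≤ madMaxAbs σ z := by
          unfold madE
          rw [dif_pos hN]
          exact le_trans (min_le_right _ _) (Finset.inf'_le _ hσN)
        obtain ⟨i0, hi0, hsup⟩ := Finset.exists_mem_eq_sup' hσne
          (fun i => ‖z i‖)
        rw [madMaxAbs_eq hσne, hsup] at h1
        have : ‖z i0‖ < madE K z := by
          have := Finset.mem_filter.mp hi0
          exact this.2
        linarith
      refine ⟨σ, hσK, ?_, ?_⟩
      · intro i
        have hmax : 0 < max (‖z i‖) (madE K z) :=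
          lt_of_lt_of_le hE (le_max_right _ _)
        simp only [madH, norm_mul, Complex.norm_real, Real.norm_eq_abs]
        rw [abs_of_nonneg (by positivity : (0:ℝ) ≤ (1 - 1) + 1 * (max (‖z i‖) (madE K z))⁻¹)]
        have : (1 - 1) + 1 * (max (‖z i‖) (madE K z))⁻¹
            = (max (‖z i‖) (madE K z))⁻¹ := by ring
        rw [this]
        rw [← div_eq_mul_inv]
        exact div_le_one_of_le₀ (le_max_left _ _) hmax.le
      · intro i hiσ
        have hge : madE K z ≤ ‖z i‖ := by
          by_contra h
          exact hiσ (Finset.mem_filter.mpr ⟨Finset.mem_univ i, lt_of_not_ge h⟩)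
        have hmax : max (‖z i‖) (madE K z) = ‖z i‖ :=
          max_eq_left hge
        have hpos : 0 < ‖z i‖ := lt_of_lt_of_le hE hge
        simp only [madH, norm_mul, Complex.norm_real, Real.norm_eq_abs, hmax]
        rw [abs_of_nonneg (by positivity : (0:ℝ) ≤ (1 - 1) + 1 * (‖z i‖)⁻¹)]
        have : (1 - 1) + 1 * (‖z i‖)⁻¹ = (‖z i‖)⁻¹ := by ring
        rw [this]
        exact mul_inv_cancel₀ (ne_of_gt hpos)
    · -- H(t,z) ∈ U(K)
      intro t ht z hz
      rw [mem_coordArrComplement]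
      intro ω hωK
      obtain ⟨i, hi, hzi⟩ := mem_coordArrComplement.mp hz ω hωK
      refine ⟨i, hi, ?_⟩
      simp only [madH]
      exact mul_ne_zero hzi (by
        rw [Ne, Complex.ofReal_eq_zero]
        exact ne_of_gt (madH_scalar_pos ht hz i))
    · -- H(t,z) = z on Z_K
      intro t ht z hz
      have hE := madE_eq_one_of_mem hK hz
      obtain ⟨σ, hσK, hle, hone⟩ := mem_momentAngleCplx.mp hz
      funext i
      have hmax : max (‖z i‖) (madE K z) = 1 := by
        rw [hE]; exact max_eq_right (hle i)
      simp only [madH, hmax]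
      have : (1 - t) + t * (1:ℝ)⁻¹ = 1 := by ring
      rw [this]
      simp
    · -- equivariance
      intro g hg t ht z hz
      have habs : ∀ i, ‖g i * z i‖ = ‖z i‖ := by
        intro i; rw [norm_mul, hg i, one_mul]
      have hEeq : madE K (fun i => g i * z i) = madE K z := by
        unfold madE
        split_ifs with h
        · congr 1
          refine Finset.inf'_congr h rfl ?_
          intro ω hω
          obtain ⟨-, hωne⟩ := mem_madNonfaces.mp hω
          rw [madMaxAbs_eq hωne, madMaxAbs_eq hωne]
          exact Finset.sup'_congr hωne rfl (fun i _ => habs i)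
        · rfl
      funext i
      simp only [madH, hEeq, habs i]
      ring
end
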